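/- Let V be a locally countable pseudovariety of finite semigroups and let W be a locally finite pseudovariety all of whose members are nilpotent semigroups. Then the Mal'cev product V ⓜ W is locally countable. -/
import Mathlib


/-- A bundled finite semigroup. -/
structure FinSgp : Type 1 where
  carrier : Type
  [str : Semigroup carrier]
  [fin : Finite carrier]

attribute [instance] FinSgp.str FinSgp.fin

/-- Finite semigroups carry the discrete topology. -/
instance (T : FinSgp) : TopologicalSpace T.carrier := ⊥

instance (T : FinSgp) : DiscreteTopology T.carrier := ⟨rfl⟩

/-- A pseudovariety of finite semigroups: a class of finite semigroups closed under
homomorphic images, (isomorphic copies of) subsemigroups, and binary direct products. -/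
def IsPseudovariety (V : Set FinSgp) : Prop :=
  (∀ S ∈ V, ∀ (T : FinSgp) (f : S.carrier →ₙ* T.carrier), Function.Surjective f → T ∈ V) ∧
  (∀ S ∈ V, ∀ (T : FinSgp) (f : T.carrier →ₙ* S.carrier), Function.Injective f → T ∈ V) ∧
  (∀ S ∈ V, ∀ T ∈ V, (FinSgp.mk (S.carrier × T.carrier)) ∈ V)

/-- A profinite semigroup: a compact, Hausdorff, totally disconnected topological semigroup. -/
def IsProfiniteSgp (S : Type) [Semigroup S] [TopologicalSpace S] : Prop :=
  ContinuousMul S ∧ CompactSpace S ∧ T2Space S ∧ TotallyDisconnectedSpace S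

/-- A pro-V semigroup: a profinite semigroup whose points are separated by continuous
homomorphisms onto finite semigroups belonging to V. -/
def IsProV (V : Set FinSgp) (S : Type) [Semigroup S] [TopologicalSpace S] : Prop :=
  IsProfiniteSgp S ∧ ∀ x y : S, x ≠ y →
    ∃ (T : FinSgp) (f : S →ₙ* T.carrier),
      T ∈ V ∧ Continuous f ∧ Function.Surjective f ∧ f x ≠ f y

/-- `A` topologically generates the topological semigroup `S`. -/
def TopGen (S : Type) [Semigroup S] [TopologicalSpace S] (A : Set S) : Prop :=
  closure ((Subsemigroup.closure A : Subsemigroup S) : Set S) = Set.univ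

/-- A topological semigroup is locally countable if every closed subsemigroup
topologically generated by a finite subset is countable. -/
def IsLocCountable (S : Type) [Semigroup S] [TopologicalSpace S] : Prop :=
  ∀ A : Set S, A.Finite →
    (closure ((Subsemigroup.closure A : Subsemigroup S) : Set S)).Countable

/-- A pseudovariety is locally countable if every pro-V semigroup is locally countable. -/
def PVLocallyCountable (V : Set FinSgp) : Prop :=
  ∀ (S : Type) [Semigroup S] [TopologicalSpace S], IsProV V S → IsLocCountable S

/-- A pseudovariety is locally finite if every finitely generated pro-V semigroup is finite. -/
def PVLocallyFinite (V : Set FinSgp) : Prop :=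
  ∀ (S : Type) [Semigroup S] [TopologicalSpace S], IsProV V S →
    (∃ A : Set S, A.Finite ∧ TopGen S A) → Finite S

/-- The join of two pseudovarieties: the smallest pseudovariety containing both. -/
def PVJoin (V W : Set FinSgp) : Set FinSgp :=
  ⋂₀ {U | IsPseudovariety U ∧ V ⊆ U ∧ W ⊆ U}

/-- The preimage of an idempotent under a semigroup homomorphism, as a subsemigroup. -/
def idemFiber {S T : Type} [Semigroup S] [Semigroup T] (f : S →ₙ* T)
    (e : T) (he : e * e = e) : Subsemigroup S where
  carrier := f ⁻¹' {e}
  mul_mem' := fun {a b} ha hb => by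
    simp only [Set.mem_preimage, Set.mem_singleton_iff] at ha hb ⊢
    rw [map_mul, ha, hb, he]

/-- A subsemigroup of a finite semigroup, as a bundled finite semigroup. -/
def subFinSgp {S : Type} [Semigroup S] [Finite S] (T : Subsemigroup S) : FinSgp :=
  FinSgp.mk T

/-- The generators of the Mal'cev product `V ⓜ W`: finite semigroups `S` admitting a
homomorphism onto some `T ∈ W` whose fibers over idempotents lie in `V`. -/
def MalcevWitness (V W : Set FinSgp) (S : FinSgp) : Prop :=
  ∃ (T : FinSgp) (f : S.carrier →ₙ* T.carrier), T ∈ W ∧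
    ∀ (e : T.carrier) (he : e * e = e), subFinSgp (idemFiber f e he) ∈ V

/-- The Mal'cev product of two pseudovarieties: the smallest pseudovariety containing
all its generators. -/
def Malcev (V W : Set FinSgp) : Set FinSgp :=
  ⋂₀ {U | IsPseudovariety U ∧ ∀ S : FinSgp, MalcevWitness V W S → S ∈ U}

/-- Green's preorder `≤_L`. -/
def lLE {S : Type} [Semigroup S] (u v : S) : Prop := u = v ∨ ∃ x, u = x * v

/-- Green's relation `L`. -/
def GreenL {S : Type} [Semigroup S] (u v : S) : Prop := lLE u v ∧ lLE v u

/-- Green's preorder `≤_J`. -/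
def jLE {S : Type} [Semigroup S] (u v : S) : Prop :=
  u = v ∨ (∃ x, u = v * x) ∨ (∃ x, u = x * v) ∨ (∃ x y, u = x * v * y)

/-- Green's relation `J`. -/
def GreenJ {S : Type} [Semigroup S] (u v : S) : Prop := jLE u v ∧ jLE v u

/-- A regular element of a semigroup. -/
def IsRegularElt {S : Type} [Semigroup S] (s : S) : Prop := ∃ t, s = s * t * s

/-- `S` has only finitely many regular `J`-classes. -/
def FinManyRegJ (S : Type) [Semigroup S] : Prop :=
  ∃ F : Set S, F.Finite ∧ ∀ s : S, IsRegularElt s → ∃ t ∈ F, GreenJ s t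

/-- A subgroup of a semigroup: a subsemigroup which is a group under the induced
multiplication. -/
def IsSgpSubgroup (S : Type) [Semigroup S] (G : Set S) : Prop :=
  (∀ x ∈ G, ∀ y ∈ G, x * y ∈ G) ∧
  ∃ e ∈ G, (∀ x ∈ G, e * x = x ∧ x * e = x) ∧ (∀ x ∈ G, ∃ y ∈ G, x * y = e ∧ y * x = e)

/-- A group element of a semigroup: an element lying in some subgroup. -/
def IsGroupElt (S : Type) [Semigroup S] (s : S) : Prop :=
  ∃ G : Set S, IsSgpSubgroup S G ∧ s ∈ G

/-- `prodFrom f n` is the product `f 0 * f 1 * ⋯ * f n`. -/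
def prodFrom {S : Type} [Semigroup S] (f : ℕ → S) : ℕ → S
  | 0 => f 0
  | n + 1 => prodFrom f n * f (n + 1)

/-- A semigroup is nilpotent if it has a zero element and some length bound beyond
which all products equal zero. -/
def IsNilpotentSgp (S : Type) [Semigroup S] : Prop :=
  ∃ z : S, (∀ x : S, z * x = z ∧ x * z = z) ∧ ∃ n : ℕ, ∀ f : ℕ → S, prodFrom f n = z

/-- The pseudovariety `N` of finite nilpotent semigroups. -/
def NPv : Set FinSgp := {S | IsNilpotentSgp S.carrier}

/-- A semigroup which is a group. -/
def IsGroupSgp (S : Type) [Semigroup S] : Prop :=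
  ∃ e : S, (∀ x : S, e * x = x ∧ x * e = x) ∧ ∀ x : S, ∃ y : S, x * y = e ∧ y * x = e

/-- The pseudovariety `LG` of finite local groups: `eSe` is a group for each idempotent `e`. -/
def LG : Set FinSgp :=
  {S | ∀ e : S.carrier, e * e = e → ∀ s : S.carrier,
      ∃ t : S.carrier, (e * s * e) * (e * t * e) = e ∧ (e * t * e) * (e * s * e) = e}

/-- The pseudovariety `IE` of finite semigroups with exactly one idempotent. -/
def IE : Set FinSgp := {S | ∃! e : S.carrier, e * e = e}

/-- A bundled topological semigroup (carrier, multiplication, topology). -/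
structure TopSgp : Type 1 where
  carrier : Type
  [str : Semigroup carrier]
  [top : TopologicalSpace carrier]

attribute [instance] TopSgp.str TopSgp.top

/-- The fiber of a relational morphism over an idempotent, as a subsemigroup of the
domain. -/
def relFiber {S T : Type} [Semigroup S] [Semigroup T] (μ : Subsemigroup (S × T))
    (e : T) (he : e * e = e) : Subsemigroup S where
  carrier := {s | (s, e) ∈ μ}
  mul_mem' := fun {a b} ha hb => by
    have h := μ.mul_mem ha hb
    simpa [Prod.mk_mul_mk, he] using h

/-- `spow x n = x ^ (n + 1)` in a semigroup. -/
def spow {S : Type} [Semigroup S] (x : S) : ℕ → S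
  | 0 => x
  | n + 1 => spow x n * x

/-- The pseudovariety `A ∩ ESl` of finite aperiodic semigroups with commuting idempotents. -/
def AESl : Set FinSgp :=
  {S | (∃ n : ℕ, ∀ x : S.carrier, spow x (n + 1) = spow x n) ∧
       (∀ e f : S.carrier, e * e = e → f * f = f → e * f = f * e)}


section SprodLemmas

variable {M N : Type}

/-- fold product of a head and a list. -/
def sprod' [Semigroup M] (a : M) (l : List M) : M := l.foldl (· * ·) a

theorem sprod'_nil [Semigroup M] (a : M) : sprod' a [] = a := rfl

theorem sprod'_cons [Semigroup M] (a b : M) (l : List M) :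
    sprod' a (b :: l) = sprod' (a * b) l := rfl

theorem sprod'_append [Semigroup M] (a : M) (l₁ l₂ : List M) :
    sprod' a (l₁ ++ l₂) = sprod' (sprod' a l₁) l₂ := List.foldl_append ..

theorem mul_sprod' [Semigroup M] (c a : M) (l : List M) :
    c * sprod' a l = sprod' (c * a) l := by
  induction l generalizing a with
  | nil => rfl
  | cons b t ih => rw [sprod'_cons, sprod'_cons, ih, mul_assoc]

theorem sprod'_mul_sprod' [Semigroup M] (a b : M) (l m : List M) :
    sprod' a l * sprod' b m = sprod' a (l ++ b :: m) := by
  rw [sprod'_append, sprod'_cons, mul_sprod']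

theorem map_sprod' [Semigroup M] [Semigroup N] (f : M →ₙ* N) (a : M) (l : List M) :
    f (sprod' a l) = sprod' (f a) (l.map f) := by
  induction l generalizing a with
  | nil => rfl
  | cons b t ih => rw [sprod'_cons, ih, map_mul, List.map_cons, sprod'_cons]

theorem sprod'_mem [Semigroup M] (K : Subsemigroup M) {a : M} {l : List M}
    (ha : a ∈ K) (hl : ∀ b ∈ l, b ∈ K) : sprod' a l ∈ K := by
  induction l generalizing a with
  | nil => exact ha
  | cons b t ih =>
      rw [sprod'_cons]
      exact ih (K.mul_mem ha (hl b (by simp))) (fun c hc => hl c (by simp [hc]))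

theorem sprod'_pair_mem {F T : Type} [Semigroup F] [Semigroup T] (μ : Subsemigroup (F × T))
    {ι : Type} (u : ι → F) (v : ι → T) (h : ∀ i, (u i, v i) ∈ μ) :
    ∀ (l : List ι) (x : F) (y : T), (x, y) ∈ μ →
      (sprod' x (l.map u), sprod' y (l.map v)) ∈ μ := by
  intro l
  induction l with
  | nil => intro x y hxy; exact hxy
  | cons b tl ih =>
      intro x y hxy
      rw [List.map_cons, List.map_cons, sprod'_cons, sprod'_cons]
      exact ih _ _ (μ.mul_mem hxy (h b))

theorem prodFrom_congr {M : Type} [Semigroup M] {f g : ℕ → M} {n : ℕ}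
    (h : ∀ i ≤ n, f i = g i) : prodFrom f n = prodFrom g n := by
  induction n with
  | zero => exact h 0 le_rfl
  | succ k ih =>
      rw [prodFrom, prodFrom, ih (fun i hi => h i (hi.trans (Nat.le_succ k))), h (k+1) le_rfl]

theorem sprod'_eq_prodFrom {M : Type} [Semigroup M] (l : List M) (a : M) :
    sprod' a l = prodFrom (fun i => (a :: l).getD i a) l.length := by
  induction l using List.reverseRecOn with
  | nil => rfl
  | append_singleton t b ih =>
      have h1 : sprod' a (t ++ [b]) = sprod' a t * b := by
        rw [sprod'_append]; rfl
      have hlen : (t ++ [b]).length = t.length + 1 := by simp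
      rw [h1, hlen, prodFrom]
      have h2 : (a :: (t ++ [b])).getD (t.length + 1) a = b := by
        have he : (a :: (t ++ [b])) = (a :: t) ++ [b] := by simp
        rw [he, List.getD_append_right (a :: t) [b] a (t.length + 1) (by simp)]
        simp
      rw [h2, ih]
      congr 1
      apply prodFrom_congr
      intro i hi
      match i with
      | 0 => rfl
      | (j+1) =>
          have hj : j < t.length := by omega
          show (a :: t).getD (j+1) a = (a :: (t ++ [b])).getD (j+1) a
          show t.getD j a = (t ++ [b]).getD j a
          rw [List.getD_append t [b] a j hj]

theorem nilpotent_sprod' {M : Type} [Semigroup M] {z : M} {n : ℕ}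
    (h : ∀ f : ℕ → M, prodFrom f n = z) {a : M} {l : List M} (hl : n ≤ l.length) :
    sprod' a l = z := by
  have key : ∀ (b : M) (m : List M), m.length = n → sprod' b m = z := by
    intro b m hm
    rw [sprod'_eq_prodFrom, hm]
    exact h _
  calc sprod' a l = sprod' (sprod' a (l.take (l.length - n))) (l.drop (l.length - n)) := by
        rw [← sprod'_append, List.take_append_drop]
    _ = z := key _ _ (by rw [List.length_drop]; omega)

end SprodLemmas
section TopologyHelpers

theorem continuous_to_discrete' {α β : Type} [TopologicalSpace α] [TopologicalSpace β]
    [DiscreteTopology β] {f : α → β} (h : ∀ b : β, IsOpen (f ⁻¹' {b})) : Continuous f :=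
  continuous_discrete_rng.mpr h

theorem isProfinite_subtype {S : Type} [Semigroup S] [TopologicalSpace S]
    (h : IsProfiniteSgp S) (D : Subsemigroup S) (hD : IsClosed (D : Set S)) :
    IsProfiniteSgp ↥D := by
  obtain ⟨hcm, hcomp, ht2, htd⟩ := h
  haveI := hcm; haveI := hcomp; haveI := ht2; haveI := htd
  refine ⟨⟨?_⟩, isCompact_iff_compactSpace.mp hD.isCompact, inferInstance, inferInstance⟩
  have : Continuous fun p : ↥D × ↥D => ((p.1 : S) * (p.2 : S)) :=
    continuous_mul.comp ((continuous_subtype_val.comp continuous_fst).prodMk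
      (continuous_subtype_val.comp continuous_snd))
  exact this.subtype_mk _

theorem image_closure_subsemigroup {S : Type} [Semigroup S] {B : Set S}
    (D : Subsemigroup S) (hBD : (↑(Subsemigroup.closure B) : Set S) ⊆ (D : Set S)) :
    Subtype.val '' ((Subsemigroup.closure {x : ↥D | ↑x ∈ B} : Subsemigroup ↥D) : Set ↥D)
      = ↑(Subsemigroup.closure B) := by
  apply subset_antisymm
  · rintro _ ⟨x, hx, rfl⟩
    induction hx using Subsemigroup.closure_induction with
    | mem y hy => exact Subsemigroup.subset_closure hy
    | mul y z hy hz ihy ihz => exact Subsemigroup.mul_mem _ ihy ihz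
  · intro x hx
    have : ∃ hxD : x ∈ D, (⟨x, hxD⟩ : ↥D) ∈
        (Subsemigroup.closure {x : ↥D | ↑x ∈ B} : Subsemigroup ↥D) := by
      induction hx using Subsemigroup.closure_induction with
      | mem y hy =>
          exact ⟨hBD (Subsemigroup.subset_closure hy), Subsemigroup.subset_closure hy⟩
      | mul y z hy hz ihy ihz =>
          obtain ⟨hyD, hy'⟩ := ihy
          obtain ⟨hzD, hz'⟩ := ihz
          exact ⟨D.mul_mem hyD hzD, Subsemigroup.mul_mem _ hy' hz'⟩
    obtain ⟨hxD, hmem⟩ := this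
    exact ⟨⟨x, hxD⟩, hmem, rfl⟩

theorem dense_in_closure {S : Type} [Semigroup S] [TopologicalSpace S] [ContinuousMul S]
    {B : Set S} (D : Subsemigroup S)
    (hD : (D : Set S) = closure (↑(Subsemigroup.closure B) : Set S)) :
    closure ((Subsemigroup.closure {x : ↥D | ↑x ∈ B} : Subsemigroup ↥D) : Set ↥D)
      = Set.univ := by
  ext x
  simp only [Set.mem_univ, iff_true]
  rw [closure_subtype]
  rw [image_closure_subsemigroup D (by rw [hD]; exact subset_closure)]
  have := x.2
  rw [← SetLike.mem_coe, hD] at this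
  exact this

end TopologyHelpers

section FinSep

theorem fin_sep_nilpotent {C : Type} [Semigroup C] [Finite C]
    (hsep : ∀ x y : C, x ≠ y → ∃ (T : FinSgp) (f : C →ₙ* T.carrier),
      IsNilpotentSgp T.carrier ∧ f x ≠ f y) :
    ∃ n : ℕ, 1 ≤ n ∧ ∀ (a : C) (l : List C) (a' : C) (l' : List C),
      n ≤ l.length + 1 → n ≤ l'.length + 1 → sprod' a l = sprod' a' l' := by
  classical
  have hchoice : ∀ p : C × C, ∃ m : ℕ, 1 ≤ m ∧ (p.1 ≠ p.2 →
      ∃ (T : FinSgp) (f : C →ₙ* T.carrier) (z : T.carrier),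
        (∀ g : ℕ → T.carrier, prodFrom g (m - 1) = z) ∧ f p.1 ≠ f p.2) := by
    intro p
    by_cases hp : p.1 ≠ p.2
    · obtain ⟨T, f, ⟨z, _, nT, hnT⟩, hne⟩ := hsep p.1 p.2 hp
      exact ⟨nT + 1, by omega, fun _ => ⟨T, f, z, by simpa using hnT, hne⟩⟩
    · exact ⟨1, le_rfl, fun h => absurd h hp⟩
  choose m hm1 hmP using hchoice
  obtain ⟨n, hn⟩ := Finite.exists_le m
  refine ⟨n + 1, by omega, ?_⟩
  intro a l a' l' hl hl'
  by_contra hne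
  obtain ⟨T, f, z, hz, hfne⟩ := hmP (sprod' a l, sprod' a' l') hne
  apply hfne
  have hb := hn (sprod' a l, sprod' a' l')
  show f (sprod' a l) = f (sprod' a' l')
  have h1 : f (sprod' a l) = z := by
    rw [map_sprod']
    exact nilpotent_sprod' hz (by rw [List.length_map]; omega)
  have h2 : f (sprod' a' l') = z := by
    rw [map_sprod']
    exact nilpotent_sprod' hz (by rw [List.length_map]; omega)
  rw [h1, h2]

end FinSep
section RM

/-- Finite semigroups admitting a relational morphism into a member of `W`
whose idempotent fibers lie in `V`. -/
def RMclass (V W : Set FinSgp) : Set FinSgp :=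
  {F | ∃ T : FinSgp, T ∈ W ∧ ∃ μ : Subsemigroup (F.carrier × T.carrier),
    (∀ s : F.carrier, ∃ t, (s, t) ∈ μ) ∧
    ∀ (e : T.carrier) (he : e * e = e), subFinSgp (relFiber μ e he) ∈ V}

theorem RMclass_pseudovariety (V W : Set FinSgp) (hV : IsPseudovariety V)
    (hW : IsPseudovariety W) : IsPseudovariety (RMclass V W) := by
  obtain ⟨hV1, hV2, hV3⟩ := hV
  obtain ⟨hW1, hW2, hW3⟩ := hW
  refine ⟨?_, ?_, ?_⟩
  · -- homomorphic images
    rintro S ⟨T, hTW, μ, hfull, hfib⟩ S' φ hφ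
    refine ⟨T, hTW, Subsemigroup.map (MulHom.prodMap φ (MulHom.id T.carrier)) μ, ?_, ?_⟩
    · intro s'
      obtain ⟨s, rfl⟩ := hφ s'
      obtain ⟨t, ht⟩ := hfull s
      exact ⟨t, ⟨(s, t), ht, rfl⟩⟩
    · intro e he
      have hmem : ∀ x : ↥(relFiber μ e he),
          ((φ ↑x, e) : S'.carrier × T.carrier) ∈
            Subsemigroup.map (MulHom.prodMap φ (MulHom.id T.carrier)) μ :=
        fun x => ⟨((x : S.carrier), e), x.2, rfl⟩
      have hsurj : Function.Surjective
          (fun x : ↥(relFiber μ e he) =>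
            (⟨φ ↑x, hmem x⟩ : ↥(relFiber (Subsemigroup.map
              (MulHom.prodMap φ (MulHom.id T.carrier)) μ) e he))) := by
        rintro ⟨s', hs'⟩
        obtain ⟨⟨s, t⟩, hst, heq⟩ := hs'
        have h1 : φ s = s' := congrArg Prod.fst heq
        have h2 : t = e := congrArg Prod.snd heq
        subst h2
        exact ⟨⟨s, hst⟩, Subtype.ext h1⟩
      let g : ↥(relFiber μ e he) →ₙ* ↥(relFiber (Subsemigroup.map
            (MulHom.prodMap φ (MulHom.id T.carrier)) μ) e he) :=
        ⟨fun x => ⟨φ ↑x, hmem x⟩, fun x y => Subtype.ext (map_mul φ _ _)⟩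
      exact hV1 (subFinSgp (relFiber μ e he)) (hfib e he) _ g hsurj
  · -- subsemigroups
    rintro S ⟨T, hTW, μ, hfull, hfib⟩ S' ι hι
    refine ⟨T, hTW, Subsemigroup.comap (MulHom.prodMap ι (MulHom.id T.carrier)) μ, ?_, ?_⟩
    · intro s
      obtain ⟨t, ht⟩ := hfull (ι s)
      exact ⟨t, ht⟩
    · intro e he
      let g : ↥(relFiber (Subsemigroup.comap (MulHom.prodMap ι (MulHom.id T.carrier)) μ) e he)
          →ₙ* ↥(relFiber μ e he) :=
        ⟨fun x => ⟨ι ↑x, x.2⟩, fun x y => Subtype.ext (map_mul ι _ _)⟩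
      refine hV2 (subFinSgp (relFiber μ e he)) (hfib e he) _ g ?_
      intro x y h
      exact Subtype.ext (hι (congrArg Subtype.val h))
  · -- products
    rintro S₁ ⟨T₁, hT1, μ₁, hfull1, hfib1⟩ S₂ ⟨T₂, hT2, μ₂, hfull2, hfib2⟩
    refine ⟨FinSgp.mk (T₁.carrier × T₂.carrier), hW3 T₁ hT1 T₂ hT2, ?_⟩
    let σ : (S₁.carrier × S₂.carrier) × (T₁.carrier × T₂.carrier) →ₙ*
        (S₁.carrier × T₁.carrier) × (S₂.carrier × T₂.carrier) :=
      ⟨fun p => ((p.1.1, p.2.1), (p.1.2, p.2.2)), fun x y => rfl⟩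
    refine ⟨Subsemigroup.comap σ (μ₁.prod μ₂), ?_, ?_⟩
    · rintro ⟨s₁, s₂⟩
      obtain ⟨t₁, h₁⟩ := hfull1 s₁
      obtain ⟨t₂, h₂⟩ := hfull2 s₂
      exact ⟨(t₁, t₂), h₁, h₂⟩
    · intro e he
      have he₁ : e.1 * e.1 = e.1 := congrArg Prod.fst he
      have he₂ : e.2 * e.2 = e.2 := congrArg Prod.snd he
      have hVprod := hV3 (subFinSgp (relFiber μ₁ e.1 he₁)) (hfib1 e.1 he₁)
        (subFinSgp (relFiber μ₂ e.2 he₂)) (hfib2 e.2 he₂)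
      let g : ↥(relFiber (Subsemigroup.comap σ (μ₁.prod μ₂)) e he) →ₙ*
          ↥(relFiber μ₁ e.1 he₁) × ↥(relFiber μ₂ e.2 he₂) :=
        ⟨fun x => (⟨x.val.1, x.2.1⟩, ⟨x.val.2, x.2.2⟩), fun x y => rfl⟩
      refine hV2 _ hVprod _ g ?_
      intro x y h
      apply Subtype.ext
      have h1 := congrArg (fun p => (Subtype.val p.1)) h
      have h2 := congrArg (fun p => (Subtype.val p.2)) h
      exact Prod.ext h1 h2

theorem malcev_subset_RMclass (V W : Set FinSgp) (hV : IsPseudovariety V)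
    (hW : IsPseudovariety W) : Malcev V W ⊆ RMclass V W := by
  apply Set.sInter_subset_of_mem
  refine ⟨RMclass_pseudovariety V W hV hW, ?_⟩
  rintro S ⟨T, f, hTW, hfib⟩
  refine ⟨T, hTW, ⟨{p | f p.1 = p.2}, ?_⟩, fun s => ⟨f s, rfl⟩, ?_⟩
  · rintro ⟨a₁, a₂⟩ ⟨b₁, b₂⟩ ha hb
    show f (a₁ * b₁) = a₂ * b₂
    rw [map_mul, ha, hb]
  · intro e he
    let g : ↥(relFiber (⟨{p | f p.1 = p.2}, by
        rintro ⟨a₁, a₂⟩ ⟨b₁, b₂⟩ ha hb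
        show f (a₁ * b₁) = a₂ * b₂
        rw [map_mul, ha, hb]⟩ : Subsemigroup (S.carrier × T.carrier)) e he) →ₙ*
        ↥(idemFiber f e he) :=
      ⟨fun x => ⟨↑x, x.2⟩, fun x y => Subtype.ext rfl⟩
    refine hV.2.1 (subFinSgp (idemFiber f e he)) (hfib e he) _ g ?_
    intro x y h
    exact Subtype.ext (congrArg Subtype.val h)

end RM
section Uniform

theorem continuous_of_discrete_comp_inj {α β γ : Type} [TopologicalSpace α]
    [TopologicalSpace β] [DiscreteTopology β] [TopologicalSpace γ] [DiscreteTopology γ]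
    {f : α → β} {u : β → γ} (hu : Function.Injective u) (h : Continuous (u ∘ f)) :
    Continuous f := by
  apply continuous_to_discrete'
  intro b
  have hpre : f ⁻¹' {b} = (u ∘ f) ⁻¹' {u b} := by
    ext a
    simp [hu.eq_iff]
  rw [hpre]
  exact (isOpen_discrete _).preimage h

set_option maxHeartbeats 1000000 in

theorem uniform_nilpotency_bound (W : Set FinSgp) (hW : IsPseudovariety W)
    (hWlf : PVLocallyFinite W) (hWnil : ∀ T ∈ W, IsNilpotentSgp T.carrier)
    (ι : Type) [Finite ι] :
    ∃ n : ℕ, 1 ≤ n ∧ ∀ (T : FinSgp), T ∈ W → ∀ g : ι → T.carrier,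
      ∀ (a₁ : ι) (l₁ : List ι) (a₂ : ι) (l₂ : List ι),
        n ≤ l₁.length + 1 → n ≤ l₂.length + 1 →
        sprod' (g a₁) (l₁.map g) = sprod' (g a₂) (l₂.map g) := by
  by_contra hcon
  push_neg at hcon
  have hc : ∀ n : ℕ, ∃ (T : FinSgp) (g : ι → T.carrier) (a₁ : ι) (l₁ : List ι)
      (a₂ : ι) (l₂ : List ι), T ∈ W ∧ n ≤ l₁.length + 1 ∧ n ≤ l₂.length + 1 ∧
      sprod' (g a₁) (l₁.map g) ≠ sprod' (g a₂) (l₂.map g) := by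
    intro n
    obtain ⟨T, hTW, g, a₁, l₁, a₂, l₂, h1, h2, h3⟩ := hcon (n + 1) (by omega)
    exact ⟨T, g, a₁, l₁, a₂, l₂, hTW, by omega, by omega, h3⟩
  choose T g a₁ l₁ a₂ l₂ hTW hlen₁ hlen₂ hne using hc
  -- the product profinite semigroup
  haveI icm : ∀ m : ℕ, ContinuousMul ((T m).carrier) :=
    fun m => ⟨continuous_of_discreteTopology⟩
  let X := ∀ m : ℕ, (T m).carrier
  let ghat : ι → X := fun i m => g m i
  let D : Subsemigroup X := (Subsemigroup.closure (Set.range ghat)).topologicalClosure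
  have hprofX : IsProfiniteSgp X := ⟨inferInstance, inferInstance, inferInstance, inferInstance⟩
  have hDcoe : (D : Set X) = closure (↑(Subsemigroup.closure (Set.range ghat)) : Set X) := rfl
  have hDclosed : IsClosed (D : Set X) := hDcoe ▸ isClosed_closure
  have hmemD : ∀ i, ghat i ∈ D := fun i => by
    rw [← SetLike.mem_coe, hDcoe]
    exact subset_closure (Subsemigroup.subset_closure (Set.mem_range_self i))
  clear_value D
  have hprofD : IsProfiniteSgp ↥D := isProfinite_subtype hprofX D hDclosed
  -- coordinate homomorphisms restricted to D
  let π : ∀ m : ℕ, ↥D →ₙ* (T m).carrier :=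
    fun m => ⟨fun d => (d : X) m, fun a b => rfl⟩
  have hproV : IsProV W ↥D := by
    refine ⟨hprofD, ?_⟩
    intro x y hxy
    have hvne : (x : X) ≠ (y : X) := fun h => hxy (Subtype.ext h)
    obtain ⟨m, hm⟩ := Function.ne_iff.mp hvne
    let ψ : ↥D →ₙ* (subFinSgp (π m).srange).carrier :=
      ⟨fun d => ⟨(π m) d, MulHom.mem_srange.mpr ⟨d, rfl⟩⟩,
        fun a b => Subtype.ext (map_mul (π m) a b)⟩
    refine ⟨subFinSgp (π m).srange, ψ, ?_, ?_, ?_, ?_⟩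
    · exact hW.2.1 (T m) (hTW m) (subFinSgp (π m).srange)
        (MulMemClass.subtype (π m).srange) Subtype.val_injective
    · refine continuous_of_discrete_comp_inj
        (u := (Subtype.val : ↥((π m).srange) → (T m).carrier))
        Subtype.val_injective ?_
      exact (continuous_apply m).comp continuous_subtype_val
    · rintro ⟨r, hr⟩
      obtain ⟨d, hd⟩ := MulHom.mem_srange.mp hr
      exact ⟨d, Subtype.ext hd⟩
    · intro h
      exact hm (congrArg Subtype.val h)
  -- D is finitely generated, hence finite
  have hTG : TopGen ↥D {x : ↥D | ↑x ∈ Set.range ghat} := dense_in_closure D hDcoe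
  have hAgen : {x : ↥D | ↑x ∈ Set.range ghat}.Finite :=
    (Set.finite_range ghat).preimage Subtype.val_injective.injOn
  haveI hfinD : Finite ↥D := hWlf _ hproV ⟨_, hAgen, hTG⟩
  -- all long products in D coincide
  obtain ⟨n₀, hn₀1, hkey⟩ := fin_sep_nilpotent (C := ↥D) (by
    intro x y hxy
    have hvne : (x : X) ≠ (y : X) := fun h => hxy (Subtype.ext h)
    obtain ⟨m, hm⟩ := Function.ne_iff.mp hvne
    exact ⟨T m, π m, hWnil (T m) (hTW m), hm⟩)
  -- derive the contradiction at index n₀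
  apply hne n₀
  let ahat : ι → ↥D := fun i => ⟨ghat i, hmemD i⟩
  have hD1 : sprod' (ahat (a₁ n₀)) ((l₁ n₀).map ahat)
      = sprod' (ahat (a₂ n₀)) ((l₂ n₀).map ahat) := by
    apply hkey
    · rw [List.length_map]; exact hlen₁ n₀
    · rw [List.length_map]; exact hlen₂ n₀
  have e1 : ∀ (a : ι) (l : List ι), sprod' (g n₀ a) (l.map (g n₀))
      = (π n₀) (sprod' (ahat a) (l.map ahat)) := by
    intro a l
    rw [map_sprod', List.map_map]
    rfl
  rw [e1, e1, hD1]

end Uniform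
/-- The Mal'cev product of a locally countable pseudovariety with a
locally finite pseudovariety of nilpotent semigroups is locally countable. -/
theorem malcev_nilpotent_locallyCountable
    (V W : Set FinSgp) (hV : IsPseudovariety V) (hVc : PVLocallyCountable V)
    (hW : IsPseudovariety W) (hWlf : PVLocallyFinite W)
    (hWnil : ∀ T ∈ W, IsNilpotentSgp T.carrier) :
    PVLocallyCountable (Malcev V W) := by
  intro S _ _ hS A hA
  obtain ⟨⟨hcm, hcomp, ht2, htd⟩, hsep⟩ := hS
  haveI := hcm; haveI := hcomp; haveI := ht2; haveI := htd
  rcases A.eq_empty_or_nonempty with rfl | hAne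
  · have h1 : (↑(Subsemigroup.closure (∅ : Set S)) : Set S) = (∅ : Set S) := by
      rw [Subsemigroup.closure_empty]
      exact Set.eq_empty_iff_forall_notMem.mpr fun x hx => Subsemigroup.notMem_bot hx
    rw [h1, closure_empty]
    exact Set.countable_empty
  obtain ⟨a₀, ha₀⟩ := hAne
  haveI : Finite ↥A := hA.to_subtype
  obtain ⟨n, hn1, hunif⟩ := uniform_nilpotency_bound W hW hWlf hWnil ↥A
  let ev : ↥A × List ↥A → S := fun p => sprod' (p.1 : S) (p.2.map Subtype.val)
  let Bset : Set S := ev '' {p | n ≤ p.2.length + 1 ∧ p.2.length + 1 < 2 * n}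
  let Pset : Set S := ev '' {p | p.2.length + 1 < n}
  have hlists : {l : List ↥A | l.length ≤ 2 * n}.Finite := List.finite_length_le ↥A (2 * n)
  have hpairs : ((Set.univ : Set ↥A) ×ˢ {l : List ↥A | l.length ≤ 2 * n}).Finite :=
    Set.Finite.prod Set.finite_univ hlists
  have hBfin : Bset.Finite :=
    Set.Finite.image ev (hpairs.subset fun p hp => ⟨trivial, by
      have := hp.2; simp only [Set.mem_setOf_eq]; omega⟩)
  have hPfin : Pset.Finite :=
    Set.Finite.image ev (hpairs.subset fun p hp => ⟨trivial, by
      have : p.2.length + 1 < n := hp; simp only [Set.mem_setOf_eq]; omega⟩)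
  -- every element of the subsemigroup generated by A is a word
  have hrep : ∀ x ∈ Subsemigroup.closure A, ∃ (a : ↥A) (l : List ↥A),
      x = sprod' (a : S) (l.map Subtype.val) := by
    intro x hx
    induction hx using Subsemigroup.closure_induction with
    | mem y hy => exact ⟨⟨y, hy⟩, [], rfl⟩
    | mul y z hy hz ihy ihz =>
        obtain ⟨a, l, rfl⟩ := ihy
        obtain ⟨b, m, rfl⟩ := ihz
        exact ⟨a, l ++ b :: m, by rw [List.map_append, List.map_cons, ← sprod'_mul_sprod']⟩
  -- long words decompose into blocks from Bset
  have hdecomp : ∀ (L : ℕ) (a : ↥A) (l : List ↥A), l.length + 1 = L → n ≤ L →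
      sprod' (a : S) (l.map Subtype.val) ∈ Subsemigroup.closure Bset := by
    intro L
    induction L using Nat.strong_induction_on with
    | _ L ih =>
      intro a l hL hnL
      by_cases hsmall : L < 2 * n
      · have hc2 : n ≤ l.length + 1 ∧ l.length + 1 < 2 * n := by omega
        exact Subsemigroup.subset_closure ⟨(a, l), hc2, rfl⟩
      · have hlen2 : (l.drop (n - 1)).length = L - n := by
          rw [List.length_drop]; omega
        obtain ⟨b, rest, hbr⟩ : ∃ b rest, l.drop (n - 1) = b :: rest := by
          cases hl2 : l.drop (n - 1) with
          | nil => rw [hl2] at hlen2; simp at hlen2; omega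
          | cons b rest => exact ⟨b, rest, rfl⟩
        have hsplit : sprod' (a : S) (l.map Subtype.val)
            = sprod' (a : S) ((l.take (n-1)).map Subtype.val)
              * sprod' (b : S) (rest.map Subtype.val) := by
          conv_lhs => rw [← List.take_append_drop (n-1) l]
          rw [hbr, List.map_append, sprod'_append, List.map_cons, sprod'_cons, mul_sprod']
        have h1 : sprod' (a : S) ((l.take (n-1)).map Subtype.val)
            ∈ Subsemigroup.closure Bset := by
          apply Subsemigroup.subset_closure
          refine ⟨(a, l.take (n-1)), ⟨?_, ?_⟩, rfl⟩ <;>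
            · simp only [Set.mem_setOf_eq, List.length_take]
              omega
        have hrest : rest.length + 1 = L - n := by
          rw [hbr] at hlen2
          simpa using hlen2
        have h2 : sprod' (b : S) (rest.map Subtype.val) ∈ Subsemigroup.closure Bset :=
          ih (L - n) (by omega) b rest hrest (by omega)
        rw [hsplit]
        exact Subsemigroup.mul_mem _ h1 h2
  have hcov1 : (↑(Subsemigroup.closure A) : Set S) ⊆
      Pset ∪ ↑(Subsemigroup.closure Bset) := by
    intro x hx
    obtain ⟨a, l, rfl⟩ := hrep x hx
    by_cases hc : l.length + 1 < n
    · exact Or.inl ⟨(a, l), hc, rfl⟩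
    · exact Or.inr (hdecomp (l.length + 1) a l rfl (by omega))
  have hcover : (closure (↑(Subsemigroup.closure A) : Set S)) ⊆
      Pset ∪ closure (↑(Subsemigroup.closure Bset) : Set S) := by
    have h2 := closure_mono hcov1
    rw [closure_union, hPfin.isClosed.closure_eq] at h2
    exact h2
  -- the closed subsemigroup generated by Bset
  let Dsub : Subsemigroup S := (Subsemigroup.closure Bset).topologicalClosure
  have hDcoe : (Dsub : Set S) = closure (↑(Subsemigroup.closure Bset) : Set S) := rfl
  have hDclosed : IsClosed (Dsub : Set S) := hDcoe ▸ isClosed_closure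
  have hprofD : IsProfiniteSgp ↥Dsub :=
    isProfinite_subtype ⟨hcm, hcomp, ht2, htd⟩ Dsub hDclosed
  have hRM := malcev_subset_RMclass V W hV hW
  have hproV : IsProV V ↥Dsub := by
    refine ⟨hprofD, ?_⟩
    intro x y hxy
    obtain ⟨F, f, hFM, hfc, hfs, hfne⟩ := hsep (x : S) (y : S) fun h => hxy (Subtype.ext h)
    obtain ⟨T, hTW, μ, hfull, hfib⟩ := hRM hFM
    choose t ht using fun a : ↥A => hfull (f (a : S))
    have he : (sprod' (t ⟨a₀, ha₀⟩) ((List.replicate (n-1) ⟨a₀, ha₀⟩).map t)) *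
        (sprod' (t ⟨a₀, ha₀⟩) ((List.replicate (n-1) ⟨a₀, ha₀⟩).map t)) =
        sprod' (t ⟨a₀, ha₀⟩) ((List.replicate (n-1) ⟨a₀, ha₀⟩).map t) := by
      rw [sprod'_mul_sprod', ← List.map_cons, ← List.map_append]
      exact hunif T hTW t _ _ _ _
        (by simp only [List.length_append, List.length_replicate, List.length_cons]; omega)
        (by simp only [List.length_replicate]; omega)
    set e : T.carrier := sprod' (t ⟨a₀, ha₀⟩) ((List.replicate (n-1) ⟨a₀, ha₀⟩).map t) with hedef
    have hfiber : ∀ s ∈ Subsemigroup.closure Bset, (f s, e) ∈ μ := by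
      intro s hs
      induction hs using Subsemigroup.closure_induction with
      | mem w hw =>
          obtain ⟨⟨a, l⟩, ⟨hl1, _⟩, rfl⟩ := hw
          have hp := sprod'_pair_mem μ (fun i : ↥A => f (i : S)) t ht l (f (a : S)) (t a) (ht a)
          have hfx : f (ev (a, l)) = sprod' (f (a : S)) (l.map fun i : ↥A => f (i : S)) := by
            show f (sprod' (a : S) (l.map Subtype.val)) = _
            rw [map_sprod', List.map_map]
            rfl
          have hte : sprod' (t a) (l.map t) = e :=
            hunif T hTW t a l _ _ hl1 (by simp only [List.length_replicate]; omega)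
          rw [hfx, ← hte]
          exact hp
      | mul u v hu hv ihu ihv =>
          rw [map_mul, ← he]
          exact μ.mul_mem ihu ihv
    have hmapsto : ∀ d : ↥Dsub, (f (d : S), e) ∈ μ := by
      intro d
      have hd : (d : S) ∈ closure (↑(Subsemigroup.closure Bset) : Set S) := by
        rw [← hDcoe]; exact d.2
      have h3 : f (d : S) ∈ closure {w : F.carrier | (w, e) ∈ μ} :=
        map_mem_closure hfc hd fun w hw => hfiber w hw
      rwa [IsClosed.closure_eq (isClosed_discrete _)] at h3
    let φ : ↥Dsub →ₙ* F.carrier := f.comp (MulMemClass.subtype Dsub)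
    let ψ : ↥Dsub →ₙ* (subFinSgp φ.srange).carrier :=
      ⟨fun d => ⟨φ d, MulHom.mem_srange.mpr ⟨d, rfl⟩⟩, fun a b => Subtype.ext (map_mul φ a b)⟩
    refine ⟨subFinSgp φ.srange, ψ, ?_, ?_, ?_, ?_⟩
    · have hmemr : ∀ r : ↥(φ.srange), ((r : F.carrier), e) ∈ μ := by
        rintro ⟨r, hr⟩
        obtain ⟨d, rfl⟩ := MulHom.mem_srange.mp hr
        exact hmapsto d
      let g : ↥(φ.srange) →ₙ* ↥(relFiber μ e he) :=
        ⟨fun r => ⟨(r : F.carrier), hmemr r⟩, fun a b => Subtype.ext rfl⟩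
      exact hV.2.1 (subFinSgp (relFiber μ e he)) (hfib e he) (subFinSgp φ.srange) g
        fun a b hab => Subtype.ext
          (congrArg (fun z : ↥(relFiber μ e he) => (z : F.carrier)) hab)
    · refine continuous_of_discrete_comp_inj
        (u := (Subtype.val : ↥(φ.srange) → F.carrier)) Subtype.val_injective ?_
      exact hfc.comp continuous_subtype_val
    · rintro ⟨r, hr⟩
      obtain ⟨d, hd⟩ := MulHom.mem_srange.mp hr
      exact ⟨d, Subtype.ext hd⟩
    · intro h
      exact hfne (congrArg Subtype.val h)
  -- apply local countability of V
  have hTG := dense_in_closure Dsub hDcoe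
  have hB'fin : {x : ↥Dsub | ↑x ∈ Bset}.Finite :=
    hBfin.preimage Subtype.val_injective.injOn
  have hcnt := hVc _ hproV {x : ↥Dsub | ↑x ∈ Bset} hB'fin
  rw [hTG] at hcnt
  haveI : Countable ↥Dsub := Set.countable_univ_iff.mp hcnt
  have hDcnt : (closure (↑(Subsemigroup.closure Bset) : Set S)).Countable := by
    rw [← hDcoe]
    exact Set.Countable.mono (fun z hz => ⟨⟨z, hz⟩, rfl⟩ :
      (Dsub : Set S) ⊆ Set.range (Subtype.val : ↥Dsub → S)) (Set.countable_range _)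
  exact Set.Countable.mono hcover (Set.Countable.union hPfin.countable hDcnt)
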